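/- The comb tree C_{n,k} is increasing, has depth vector (n−1, n−1, ..., n−1, n) (with k−1 entries equal to n−1 followed by one entry n), and has the lexicographically largest depth vector among all trees in 𝕋_{n,k}. -/

import Mathlib

/-- Plane rooted `n`-ary trees: every internal node has exactly `n` ordered children. -/
inductive NTree (n : ℕ) : Type
  | leaf : NTree n
  | node : (Fin n → NTree n) → NTree n

namespace NTree

/-- The number of internal nodes; `T ∈ 𝕋_{n,k}` means `internals T = k`. -/
def internals {n : ℕ} : NTree n → ℕ
  | leaf => 0
  | node c => 1 + ∑ i, internals (c i)

/-- Boolean test for being a leaf. -/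
def isLeafB {n : ℕ} : NTree n → Bool
  | leaf => true
  | node _ => false

/-- `μ_T(a)`: the number of children of an internal node that are leaves. -/
def muNode {n : ℕ} (c : Fin n → NTree n) : ℕ :=
  (Finset.univ.filter (fun i => isLeafB (c i) = true)).card

/-- A tree is increasing if whenever an internal node `a` has an internal-node child `b`,
`μ(a) ≤ μ(b)`. -/
def Increasing {n : ℕ} : NTree n → Prop
  | leaf => True
  | node c => (∀ i, Increasing (c i)) ∧
      ∀ i (c' : Fin n → NTree n), c i = node c' → muNode c ≤ muNode c'

/-- The number of leaves of a tree at depth `d`. -/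
def leavesAtDepth {n : ℕ} : NTree n → ℕ → ℕ
  | leaf => fun d => if d = 0 then 1 else 0
  | node c => fun d =>
      match d with
      | 0 => 0
      | d + 1 => ∑ i, leavesAtDepth (c i) d

/-- Strict lexicographic order on depth vectors (as functions `ℕ → ℕ`, padded with 0). -/
def LexLt (u v : ℕ → ℕ) : Prop :=
  ∃ m, (∀ i, i < m → u i = v i) ∧ u m < v m

/-- Weak lexicographic order. -/
def LexLe (u v : ℕ → ℕ) : Prop := u = v ∨ LexLt u v

/-- The comb tree `C_{n,k}`: for `k = 1` a root with `n` leaf children; for `k > 1` the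
leftmost child of the root carries `C_{n,k-1}` and the other children are leaves. -/
def comb (n : ℕ) : ℕ → NTree n
  | 0 => leaf
  | k + 1 => node (fun i => if i.val = 0 then comb n k else leaf)

end NTree

/-!
Every internal node of `C_{n,k}` has `n - 1` leaf children except the deepest, which has `n`, so
the comb is increasing. For maximality, induct on `T = node c`: if two children of the root are
internal, `T` has at most `n - 2` leaves at depth 1 against the comb's `n - 1`; if exactly one
child `c j` is internal, the depth vector of `T` is that of `c j` shifted by one plus `n - 1` leaves
at depth 1, which is how `C_{n,k+1}` arises from `C_{n,k}`, and lexicographic order is preserved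
by this operation.
-/

namespace NTree

variable {n : ℕ}

@[simp]
lemma leavesAtDepth_leaf (d : ℕ) : leavesAtDepth (leaf : NTree n) d = if d = 0 then 1 else 0 := by
  simp [leavesAtDepth]

@[simp]
lemma leavesAtDepth_node_zero (c : Fin n → NTree n) : leavesAtDepth (node c) 0 = 0 := by
  simp [leavesAtDepth]

@[simp]
lemma leavesAtDepth_node_succ (c : Fin n → NTree n) (d : ℕ) :
    leavesAtDepth (node c) (d + 1) = ∑ i, leavesAtDepth (c i) d := by
  simp [leavesAtDepth]

lemma comb_succ (k : ℕ) :
    comb n (k + 1) = node (fun i => if i.val = 0 then comb n k else leaf) := rfl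

lemma leavesAtDepth_zero (T : NTree n) : leavesAtDepth T 0 = if isLeafB T then 1 else 0 := by
  cases T <;> simp [isLeafB]

lemma leavesAtDepth_node_one (c : Fin n → NTree n) : leavesAtDepth (node c) 1 = muNode c := by
  simp only [muNode, Finset.card_filter, leavesAtDepth_node_succ, leavesAtDepth_zero]

lemma isLeafB_eq_true_iff {T : NTree n} : isLeafB T = true ↔ T = leaf := by
  cases T <;> simp [isLeafB]

lemma internals_pos {T : NTree n} (hT : T ≠ leaf) : 0 < internals T := by
  cases T with
  | leaf => exact absurd rfl hT
  | node c => simp [internals]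

section Spine

variable {c : Fin n → NTree n} {j : Fin n}

lemma internals_node_of_forall_ne (h : ∀ i, i ≠ j → c i = leaf) :
    internals (node c) = internals (c j) + 1 := by
  rw [internals, Fintype.sum_eq_single j fun i hi => by rw [h i hi, internals], add_comm]

lemma leavesAtDepth_node_succ_of_forall_ne (h : ∀ i, i ≠ j → c i = leaf) (d : ℕ) :
    leavesAtDepth (node c) (d + 1) =
      leavesAtDepth (c j) d + (n - 1) * leavesAtDepth (leaf : NTree n) d := by
  rw [leavesAtDepth_node_succ, ← Finset.add_sum_erase _ _ (Finset.mem_univ j),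
    Finset.sum_congr rfl fun i hi => by rw [h i (Finset.ne_of_mem_erase hi)], Finset.sum_const,
    Finset.card_erase_of_mem (Finset.mem_univ j), Finset.card_univ, Fintype.card_fin, smul_eq_mul]

lemma sub_one_le_muNode (h : ∀ i, i ≠ j → c i = leaf) : n - 1 ≤ muNode c := by
  calc n - 1 = (Finset.univ.erase j).card := by simp
    _ ≤ muNode c := Finset.card_le_card fun i hi => by
      simp only [Finset.mem_filter, Finset.mem_univ, true_and, isLeafB_eq_true_iff]
      exact h i (Finset.ne_of_mem_erase hi)

lemma muNode_eq_sub_one (h : ∀ i, i ≠ j → c i = leaf) (hj : c j ≠ leaf) : muNode c = n - 1 := by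
  refine le_antisymm ?_ (sub_one_le_muNode h)
  calc muNode c ≤ (Finset.univ.erase j).card := Finset.card_le_card fun i hi => by
        simp only [Finset.mem_filter, Finset.mem_univ, true_and, isLeafB_eq_true_iff] at hi
        exact Finset.mem_erase.mpr ⟨fun hij => hj (hij ▸ hi), Finset.mem_univ i⟩
    _ = n - 1 := by simp

end Spine

lemma muNode_le_sub_two {c : Fin n → NTree n} {i i' : Fin n} (hii' : i ≠ i') (hi : c i ≠ leaf)
    (hi' : c i' ≠ leaf) : muNode c ≤ n - 2 := by
  calc muNode c ≤ (Finset.univ \ {i, i'}).card := Finset.card_le_card fun l hl => by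
        simp only [Finset.mem_filter, Finset.mem_univ, true_and, isLeafB_eq_true_iff] at hl
        simp only [Finset.mem_sdiff, Finset.mem_univ, true_and, Finset.mem_insert,
          Finset.mem_singleton, not_or]
        exact ⟨fun h => hi (h ▸ hl), fun h => hi' (h ▸ hl)⟩
    _ = n - 2 := by
      rw [Finset.card_sdiff_of_subset (Finset.subset_univ _), Finset.card_pair hii',
        Finset.card_univ, Fintype.card_fin]

lemma comb_child_eq_leaf (k : ℕ) {i j : Fin n} (hj : j.val = 0) (hij : i ≠ j) :
    (if i.val = 0 then comb n k else leaf) = leaf :=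
  if_neg fun hi => hij (Fin.ext (hi.trans hj.symm))

lemma leavesAtDepth_comb_succ_succ (hn : 0 < n) (k d : ℕ) :
    leavesAtDepth (comb n (k + 1)) (d + 1) =
      leavesAtDepth (comb n k) d + (n - 1) * leavesAtDepth (leaf : NTree n) d :=
  leavesAtDepth_node_succ_of_forall_ne (j := ⟨0, hn⟩) (fun _ => comb_child_eq_leaf k rfl) d

lemma leavesAtDepth_comb {k : ℕ} (hk : 1 ≤ k) (i : ℕ) :
    leavesAtDepth (comb n k) i = if 1 ≤ i ∧ i < k then n - 1 else if i = k then n else 0 := by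
  induction k, hk using Nat.le_induction generalizing i with
  | base =>
    cases i with
    | zero => simp [comb_succ]
    | succ d => simp [comb, Finset.sum_const]
  | succ k hk ih =>
    cases i with
    | zero => simp [comb_succ]
    | succ d =>
      rcases Nat.eq_zero_or_pos n with rfl | hn
      · simp [comb_succ]
      · rw [leavesAtDepth_comb_succ_succ hn, ih, leavesAtDepth_leaf]
        split_ifs <;> omega

lemma increasing_comb (k : ℕ) : Increasing (comb n k) := by
  induction k with
  | zero => trivial
  | succ k ih =>
    refine ⟨fun i => ?_, fun i c' hc' => ?_⟩ <;> dsimp only at *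
    · split
      · exact ih
      · trivial
    · have hi : i.val = 0 := by
        by_contra hi
        simp [hi] at hc'
      rw [if_pos hi] at hc'
      obtain _ | k := k
      · cases hc'
      rw [comb_succ, node.injEq] at hc'
      rw [muNode_eq_sub_one (fun _ => comb_child_eq_leaf (k + 1) hi) (by simp [hi, comb_succ]),
        ← hc']
      exact sub_one_le_muNode fun _ => comb_child_eq_leaf k hi

lemma LexLe.shift {u v u' v' : ℕ → ℕ} (e : ℕ → ℕ) (h0 : u' 0 = v' 0)
    (hu : ∀ i, u' (i + 1) = u i + e i) (hv : ∀ i, v' (i + 1) = v i + e i) (h : LexLe u v) :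
    LexLe u' v' := by
  rcases h with rfl | ⟨m, hlt, hm⟩
  · left
    funext i
    cases i with
    | zero => exact h0
    | succ i => rw [hu, hv]
  · right
    refine ⟨m + 1, fun i hi => ?_, by rw [hu, hv]; omega⟩
    cases i with
    | zero => exact h0
    | succ i => rw [hu, hv, hlt i (by omega)]

lemma lexLt_leavesAtDepth_comb_of_two_ne_leaf {c : Fin n → NTree n} {i i' : Fin n} (hii' : i ≠ i')
    (hi : c i ≠ leaf) (hi' : c i' ≠ leaf) :
    LexLt (leavesAtDepth (node c)) (leavesAtDepth (comb n (internals (node c)))) := by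
  have hn : 2 ≤ n := by
    have := Fin.val_ne_of_ne hii'
    omega
  have hk : 2 ≤ internals (node c) := by
    have := Finset.single_le_sum (fun l _ => Nat.zero_le (internals (c l))) (Finset.mem_univ i)
    have := internals_pos hi
    rw [internals]
    omega
  refine ⟨1, fun m hm => ?_, ?_⟩
  · obtain rfl : m = 0 := by omega
    simp [leavesAtDepth_comb (by omega : 1 ≤ internals (node c))]
    omega
  · rw [leavesAtDepth_node_one, leavesAtDepth_comb (by omega), if_pos ⟨le_rfl, hk⟩]
    have := muNode_le_sub_two hii' hi hi'
    omega

theorem lexLe_leavesAtDepth_comb :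
    ∀ T : NTree n, T ≠ leaf → LexLe (leavesAtDepth T) (leavesAtDepth (comb n (internals T)))
  | leaf, h => absurd rfl h
  | node c, _ => by
    by_cases two : ∃ i i', i ≠ i' ∧ c i ≠ leaf ∧ c i' ≠ leaf
    · obtain ⟨i, i', hii', hi, hi'⟩ := two
      exact Or.inr (lexLt_leavesAtDepth_comb_of_two_ne_leaf hii' hi hi')
    by_cases one : ∃ j, c j ≠ leaf
    · obtain ⟨j, hj⟩ := one
      have rest : ∀ i, i ≠ j → c i = leaf := fun i hij => by
        by_contra hi
        exact two ⟨i, j, hij, hi, hj⟩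
      rw [internals_node_of_forall_ne rest]
      exact (lexLe_leavesAtDepth_comb (c j) hj).shift _ (by simp [comb_succ])
        (leavesAtDepth_node_succ_of_forall_ne rest) (leavesAtDepth_comb_succ_succ j.pos _)
    · push Not at one
      obtain rfl : c = fun _ => leaf := funext one
      left
      simp [internals, comb]

end NTree

/-- the comb tree `C_{n,k}` (for `k ≥ 1`) is increasing, its depth vector is
`(n−1, n−1, …, n−1, n)` (entries `n−1` at depths `1, …, k−1` and `n` at depth `k`), and
it has the lexicographically largest depth vector among all trees in `𝕋_{n,k}`. -/
theorem stmt17 (n k : ℕ) (hk : 1 ≤ k) :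
    NTree.Increasing (NTree.comb n k) ∧
    (∀ i, NTree.leavesAtDepth (NTree.comb n k) i =
      if 1 ≤ i ∧ i < k then n - 1 else if i = k then n else 0) ∧
    (∀ T : NTree n, T.internals = k →
      NTree.LexLe (NTree.leavesAtDepth T) (NTree.leavesAtDepth (NTree.comb n k))) := by
  refine ⟨NTree.increasing_comb k, NTree.leavesAtDepth_comb hk, fun T hT => ?_⟩
  have hT' : T ≠ .leaf := by rintro rfl; simp [NTree.internals] at hT; omega
  exact hT ▸ NTree.lexLe_leavesAtDepth_comb T hT'
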